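/- arXiv:2002.10544 — 2 statements merged into one kernel-verified Lean document; each statement's English description precedes it below -/
import Mathlib

section
/- For all positive integers n, d, K and every nonzero y = (y_1,…,y_n) ∈ (ℝ^d)^n, E_γ[ sup_{W∈ℝ^{K×d}, ‖W‖_F≤1} Σ_{i=1}^n Σ_{j=1}^K γ_{ij} ⟨W_j, y_i⟩ ] ≤ √K · ‖y‖, where the γ_{ij} are i.i.d. standard normal random variables, W_j denotes the j-th row of W, ‖W‖_F is the Frobenius norm, and ‖y‖ = (Σ_{i=1}^n ‖y_i‖₂²)^{1/2}. -/
noncomputable section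

open MeasureTheory ProbabilityTheory

/-- Frobenius norm of a `K × d` real matrix. -/
def frob {K d : ℕ} (W : Matrix (Fin K) (Fin d) ℝ) : ℝ :=
  Real.sqrt (∑ i, ∑ j, (W i j) ^ 2)

/-! For fixed `γ` the objective is the Frobenius inner product of `W` with
`Γᵀ Y = ∑_{i,j} γ_{ij} e_j y_iᵀ`, so by Cauchy–Schwarz the supremum is at most `‖Γᵀ Y‖_F`.
Jensen gives `E ‖Γᵀ Y‖_F ≤ (E ‖Γᵀ Y‖_F²)^{1/2}`, and since the `γ_{ij}` are orthonormal in `L²`,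
`E ‖∑_a γ_a v_a‖² = ∑_a ‖v_a‖²`, which for `v_{ij} = e_j y_iᵀ` (`rowPlacement y (i, j)`) is
`K ∑_i ‖y_i‖²`. -/

lemma integral_le_sqrt_integral_sq {Ω : Type*} [MeasurableSpace Ω] {P : Measure Ω}
    [IsProbabilityMeasure P] {f : Ω → ℝ} (hf : MemLp f 2 P) :
    ∫ ω, f ω ∂P ≤ Real.sqrt (∫ ω, f ω ^ 2 ∂P) := by
  have h := variance_nonneg f P
  rw [variance_eq_sub hf, sub_nonneg] at h
  exact Real.le_sqrt_of_sq_le h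

lemma memLp_two_id_of_integral_sq_ne_zero {μ : Measure ℝ} (h : ∫ x, x ^ 2 ∂μ ≠ 0) :
    MemLp id 2 μ :=
  (memLp_two_iff_integrable_sq aestronglyMeasurable_id).2 (Integrable.of_integral_ne_zero h)

section PiCoordinates

variable {ι : Type*} [Fintype ι] {μ : Measure ℝ} [IsProbabilityMeasure μ]

lemma memLp_two_eval_pi (h2 : MemLp id 2 μ) (a : ι) :
    MemLp (fun γ : ι → ℝ => γ a) 2 (Measure.pi fun _ => μ) :=
  h2.comp_measurePreserving (measurePreserving_eval _ a)

lemma integral_eval_mul_eval_pi [DecidableEq ι] (h_mean : ∫ x, x ∂μ = 0)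
    (h_sq : ∫ x, x ^ 2 ∂μ = 1) (a b : ι) :
    ∫ γ : ι → ℝ, γ a * γ b ∂(Measure.pi fun _ => μ) = if a = b then 1 else 0 := by
  split_ifs with hab
  · subst hab
    simp_rw [← sq]
    exact (integral_comp_eval (μ := fun _ : ι => μ) (f := fun x : ℝ => x ^ 2)
      (by fun_prop)).trans h_sq
  · have hindep := (iIndepFun_pi (μ := fun _ : ι => μ) (X := fun _ => id)
      fun _ => aemeasurable_id).indepFun hab
    simpa [integral_eval, h_mean] using hindep.integral_mul_eq_mul_integral
      (measurable_pi_apply a).aestronglyMeasurable (measurable_pi_apply b).aestronglyMeasurable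

variable {E : Type*} [NormedAddCommGroup E] [InnerProductSpace ℝ E]

lemma memLp_sum_smul_pi (h2 : MemLp id 2 μ) (v : ι → E) :
    MemLp (fun γ : ι → ℝ => ∑ a, γ a • v a) 2 (Measure.pi fun _ => μ) :=
  memLp_finsetSum _ fun a _ => (memLp_top_const (v a)).smul (memLp_two_eval_pi h2 a)

lemma integral_norm_sum_smul_sq_pi (h_mean : ∫ x, x ∂μ = 0) (h_sq : ∫ x, x ^ 2 ∂μ = 1)
    (v : ι → E) :
    ∫ γ : ι → ℝ, ‖∑ a, γ a • v a‖ ^ 2 ∂(Measure.pi fun _ => μ) = ∑ a, ‖v a‖ ^ 2 := by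
  classical
  have h2 := memLp_two_id_of_integral_sq_ne_zero (h_sq ▸ one_ne_zero)
  have hint : ∀ a b, Integrable (fun γ : ι → ℝ => inner ℝ (v a) (v b) * (γ a * γ b))
      (Measure.pi fun _ => μ) := fun a b =>
    ((memLp_two_eval_pi h2 a).integrable_mul (memLp_two_eval_pi h2 b)).const_mul _
  have expand : ∀ γ : ι → ℝ,
      ‖∑ a, γ a • v a‖ ^ 2 = ∑ a, ∑ b, inner ℝ (v a) (v b) * (γ a * γ b) := fun γ => by
    simp only [← real_inner_self_eq_norm_sq, sum_inner, inner_sum, real_inner_smul_left,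
      real_inner_smul_right]
    exact Finset.sum_congr rfl fun a _ => Finset.sum_congr rfl fun b _ => by
      rw [real_inner_comm]; ring
  simp_rw [expand]
  rw [integral_finsetSum _ fun a _ => integrable_finsetSum _ fun b _ => hint a b]
  refine Finset.sum_congr rfl fun a _ => ?_
  rw [integral_finsetSum _ fun b _ => hint a b]
  simp [integral_const_mul, integral_eval_mul_eval_pi h_mean h_sq]

end PiCoordinates

lemma integral_id_sq_gaussianReal : ∫ x, x ^ 2 ∂gaussianReal 0 1 = 1 := by
  have h := variance_eq_sub (memLp_id_gaussianReal (μ := 0) (v := 1) 2)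
  simpa [variance_id_gaussianReal, integral_id_gaussianReal] using h.symm

def flattenMatrix {m n : Type*} (W : Matrix m n ℝ) : EuclideanSpace ℝ (m × n) :=
  WithLp.toLp 2 fun p => W p.1 p.2

@[simp]
lemma flattenMatrix_zero {m n : Type*} : flattenMatrix (0 : Matrix m n ℝ) = 0 := rfl

lemma norm_flattenMatrix_vecMulVec {m n : Type*} [Fintype m] [Fintype n]
    (u : EuclideanSpace ℝ m) (v : EuclideanSpace ℝ n) :
    ‖flattenMatrix (Matrix.vecMulVec u.ofLp v.ofLp)‖ = ‖u‖ * ‖v‖ := by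
  simp only [EuclideanSpace.norm_eq, Real.norm_eq_abs, sq_abs]
  rw [← Real.sqrt_mul (Finset.sum_nonneg fun _ _ => sq_nonneg _)]
  simp [flattenMatrix, Matrix.vecMulVec_apply, Fintype.sum_prod_type, mul_pow, Finset.sum_mul_sum]

def rowPlacement {ι m n : Type*} [DecidableEq m] (y : ι → EuclideanSpace ℝ n) (a : ι × m) :
    EuclideanSpace ℝ (m × n) :=
  flattenMatrix (Matrix.vecMulVec (EuclideanSpace.single a.2 1).ofLp (y a.1).ofLp)

lemma norm_rowPlacement {ι m n : Type*} [Fintype m] [Fintype n] [DecidableEq m]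
    (y : ι → EuclideanSpace ℝ n) (a : ι × m) : ‖rowPlacement y a‖ = ‖y a.1‖ := by
  rw [rowPlacement, norm_flattenMatrix_vecMulVec, PiLp.norm_single, norm_one, one_mul]

lemma inner_flattenMatrix_rowPlacement {ι m n : Type*} [Fintype m] [Fintype n] [DecidableEq m]
    (W : Matrix m n ℝ) (y : ι → EuclideanSpace ℝ n) (i : ι) (j : m) :
    inner ℝ (flattenMatrix W) (rowPlacement y (i, j)) = ∑ k, W j k * y i k := by
  simp [rowPlacement, flattenMatrix, PiLp.inner_apply, Fintype.sum_prod_type,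
    Matrix.vecMulVec_apply, Pi.single_apply, mul_comm]

lemma inner_flattenMatrix_sum_smul_rowPlacement {ι m n : Type*} [Fintype ι] [Fintype m]
    [Fintype n] [DecidableEq m] (W : Matrix m n ℝ) (y : ι → EuclideanSpace ℝ n) (γ : ι × m → ℝ) :
    inner ℝ (flattenMatrix W) (∑ a, γ a • rowPlacement y a)
      = ∑ i, ∑ j, γ (i, j) * ∑ k, W j k * y i k := by
  simp only [inner_sum, real_inner_smul_right, inner_flattenMatrix_rowPlacement,
    Fintype.sum_prod_type]

lemma norm_flattenMatrix {K d : ℕ} (W : Matrix (Fin K) (Fin d) ℝ) :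
    ‖flattenMatrix W‖ = frob W := by
  simp [flattenMatrix, frob, EuclideanSpace.norm_eq, Fintype.sum_prod_type]

lemma inner_flattenMatrix_le_norm {K d : ℕ} {W : Matrix (Fin K) (Fin d) ℝ} (hW : frob W ≤ 1)
    (x : EuclideanSpace ℝ (Fin K × Fin d)) : inner ℝ (flattenMatrix W) x ≤ ‖x‖ := by
  refine (real_inner_le_norm _ _).trans ?_
  rw [norm_flattenMatrix]
  exact mul_le_of_le_one_left (norm_nonneg x) hW

lemma iSup_inner_flattenMatrix_le {K d : ℕ} (x : EuclideanSpace ℝ (Fin K × Fin d)) :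
    ⨆ W : {W : Matrix (Fin K) (Fin d) ℝ // frob W ≤ 1}, inner ℝ (flattenMatrix W.1) x ≤ ‖x‖ := by
  have : Nonempty {W : Matrix (Fin K) (Fin d) ℝ // frob W ≤ 1} := ⟨⟨0, by simp [frob]⟩⟩
  exact ciSup_le fun W => inner_flattenMatrix_le_norm W.2 x

lemma iSup_inner_flattenMatrix_nonneg {K d : ℕ} (x : EuclideanSpace ℝ (Fin K × Fin d)) :
    0 ≤ ⨆ W : {W : Matrix (Fin K) (Fin d) ℝ // frob W ≤ 1}, inner ℝ (flattenMatrix W.1) x := by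
  refine le_ciSup_of_le ⟨‖x‖, Set.forall_mem_range.2 fun W => inner_flattenMatrix_le_norm W.2 x⟩
    ⟨0, by simp [frob]⟩ ?_
  simp

theorem stmt_4_general (n d K : ℕ) (y : Fin n → EuclideanSpace ℝ (Fin d)) :
    (∫ γ : Fin n × Fin K → ℝ,
        (⨆ W : {W : Matrix (Fin K) (Fin d) ℝ // frob W ≤ 1},
          ∑ i : Fin n, ∑ j : Fin K, γ (i, j) * ∑ k : Fin d, W.1 j k * y i k)
        ∂(Measure.pi fun _ => gaussianReal 0 1))
      ≤ Real.sqrt K * Real.sqrt (∑ i, ‖y i‖ ^ 2) := by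
  set X : (Fin n × Fin K → ℝ) → EuclideanSpace ℝ (Fin K × Fin d) :=
    fun γ => ∑ a, γ a • rowPlacement y a
  have hX : MemLp (fun γ => ‖X γ‖) 2 (Measure.pi fun _ => gaussianReal 0 1) :=
    (memLp_sum_smul_pi (memLp_id_gaussianReal 2) _).norm
  simp_rw [← inner_flattenMatrix_sum_smul_rowPlacement]
  calc _ ≤ ∫ γ, ‖X γ‖ ∂(Measure.pi fun _ => gaussianReal 0 1) :=
        integral_mono_of_nonneg (.of_forall fun γ => iSup_inner_flattenMatrix_nonneg (X γ))
          (hX.integrable one_le_two) (.of_forall fun γ => iSup_inner_flattenMatrix_le (X γ))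
    _ ≤ Real.sqrt (∫ γ, ‖X γ‖ ^ 2 ∂(Measure.pi fun _ => gaussianReal 0 1)) :=
        integral_le_sqrt_integral_sq hX
    _ = Real.sqrt (K * ∑ i, ‖y i‖ ^ 2) := by
        rw [integral_norm_sum_smul_sq_pi integral_id_gaussianReal integral_id_sq_gaussianReal]
        simp only [norm_rowPlacement, Fintype.sum_prod_type, Finset.sum_const, Finset.card_univ,
          Fintype.card_fin, nsmul_eq_mul, Finset.mul_sum]
    _ = Real.sqrt K * Real.sqrt (∑ i, ‖y i‖ ^ 2) := Real.sqrt_mul (Nat.cast_nonneg K) _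

/-- For all positive `n, d, K` and every nonzero `y ∈ (ℝ^d)^n`,
`E_γ[sup_{‖W‖_F≤1} ∑_{i,j} γ_{ij} ⟨W_j, y_i⟩] ≤ √K · ‖y‖`, where the `γ_{ij}` are i.i.d.
standard normal, `W_j` is the `j`-th row of `W` and `‖y‖ = (∑_i ‖y_i‖²)^{1/2}`. -/
theorem stmt_4 (n d K : ℕ) (hn : 0 < n) (hd : 0 < d) (hK : 0 < K)
    (y : Fin n → EuclideanSpace ℝ (Fin d)) (hy : y ≠ 0) :
    (∫ γ : Fin n × Fin K → ℝ,
        (⨆ W : {W : Matrix (Fin K) (Fin d) ℝ // frob W ≤ 1},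
          ∑ i : Fin n, ∑ j : Fin K, γ (i, j) * ∑ k : Fin d, W.1 j k * y i k)
        ∂(Measure.pi fun _ => gaussianReal 0 1))
      ≤ Real.sqrt K * Real.sqrt (∑ i, ‖y i‖ ^ 2) :=
  stmt_4_general n d K y
end
end

section
/- Let ℓ(v,α,β,a) = K·softmax(v)_a·α − β. Then for all v₁, v₂ ∈ ℝ^K, all α₁, α₂, β₁, β₂ ∈ [−1,1] and all a ∈ {1,…,K}: (ℓ(v₁,α₁,β₁,a) − ℓ(v₂,α₂,β₂,a))² ≤ 12K²·‖v₁−v₂‖² + 3K²·(α₁−α₂)² + 3·(β₁−β₂)², where ‖·‖ is the Euclidean norm on ℝ^K. -/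
noncomputable section

/-- softmax on `ℝ^K`. -/
def softmax {K : ℕ} (v : Fin K → ℝ) (a : Fin K) : ℝ :=
  Real.exp (v a) / ∑ j, Real.exp (v j)

/-- The loss `ℓ(v,α,β,a) = K·softmax(v)_a·α − β`. -/
def ellK (K : ℕ) (v : Fin K → ℝ) (α β : ℝ) (a : Fin K) : ℝ :=
  (K : ℝ) * softmax v a * α - β

/-!
Write `s_i = softmax(v_i)_a`. The difference of losses splits as
`K (s₁ - s₂) α₁ + K s₂ (α₁ - α₂) - (β₁ - β₂)`, and `(x + y - z)² ≤ 3 (x² + y² + z²)`.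
Since `0 ≤ s₂ ≤ 1` and `|α₁| ≤ 1`, it remains to see that `v ↦ softmax(v)_a` is 2-Lipschitz:
along the line `v + t u` its derivative is `s_a (u_a - ∑ⱼ s_j u_j)`, a coordinate of `u`
minus a convex combination of coordinates of `u`, hence at most `2 ‖u‖_∞ ≤ 2 ‖u‖₂`.
-/

section

variable {K : ℕ}

lemma sum_exp_pos (v : Fin K → ℝ) (a : Fin K) : 0 < ∑ j, Real.exp (v j) :=
  Finset.sum_pos (fun _ _ => Real.exp_pos _) ⟨a, Finset.mem_univ a⟩

lemma softmax_pos (v : Fin K → ℝ) (a : Fin K) : 0 < softmax v a :=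
  div_pos (Real.exp_pos _) (sum_exp_pos v a)

lemma softmax_le_one (v : Fin K → ℝ) (a : Fin K) : softmax v a ≤ 1 := by
  rw [softmax, div_le_one (sum_exp_pos v a)]
  exact Finset.single_le_sum (fun j _ => (Real.exp_pos _).le) (Finset.mem_univ a)

lemma sum_softmax [NeZero K] (v : Fin K → ℝ) : ∑ j, softmax v j = 1 := by
  simp only [softmax, ← Finset.sum_div]
  exact div_self (sum_exp_pos v 0).ne'

lemma abs_sum_softmax_mul_le [NeZero K] (v u : Fin K → ℝ) :
    |∑ j, softmax v j * u j| ≤ ‖u‖ :=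
  calc |∑ j, softmax v j * u j|
      ≤ ∑ j, |softmax v j * u j| := Finset.abs_sum_le_sum_abs _ _
    _ ≤ ∑ j, softmax v j * ‖u‖ := by
        gcongr with j
        rw [abs_mul, abs_of_pos (softmax_pos v j)]
        exact mul_le_mul_of_nonneg_left (norm_le_pi_norm u j) (softmax_pos v j).le
    _ = ‖u‖ := by rw [← Finset.sum_mul, sum_softmax, one_mul]

lemma hasDerivAt_softmax_add_smul (v u : Fin K → ℝ) (a : Fin K) (t : ℝ) :
    HasDerivAt (fun s => softmax (v + s • u) a)
      (softmax (v + t • u) a * (u a - ∑ j, softmax (v + t • u) j * u j)) t := by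
  have hexp (j : Fin K) : HasDerivAt (fun s => Real.exp (v j + s * u j))
      (Real.exp (v j + t * u j) * u j) t := by
    simpa using (((hasDerivAt_id t).mul_const (u j)).const_add (v j)).exp
  have hD := (sum_exp_pos (fun j => v j + t * u j) a).ne'
  have hquot := (hexp a).fun_div (HasDerivAt.fun_sum fun j _ => hexp j) hD
  simp only [softmax, Pi.add_apply, Pi.smul_apply, smul_eq_mul]
  refine hquot.congr_deriv ?_
  simp only [div_mul_eq_mul_div, ← Finset.sum_div]
  field_simp

lemma abs_softmax_sub_le (v w : Fin K → ℝ) (a : Fin K) :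
    |softmax w a - softmax v a| ≤ 2 * ‖w - v‖ := by
  have : NeZero K := NeZero.of_pos a.pos
  set u := w - v
  have hderiv_le (t : ℝ) :
      ‖softmax (v + t • u) a * (u a - ∑ j, softmax (v + t • u) j * u j)‖ ≤ 2 * ‖u‖ :=
    calc ‖softmax (v + t • u) a * (u a - ∑ j, softmax (v + t • u) j * u j)‖
        ≤ 1 * (|u a| + |∑ j, softmax (v + t • u) j * u j|) := by
          rw [Real.norm_eq_abs, abs_mul, abs_of_pos (softmax_pos _ a)]
          gcongr
          · exact softmax_le_one _ a
          · exact abs_sub _ _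
      _ ≤ 1 * (‖u‖ + ‖u‖) := by
          gcongr
          · exact norm_le_pi_norm u a
          · exact abs_sum_softmax_mul_le _ u
      _ = 2 * ‖u‖ := by ring
  have hsegment := norm_image_sub_le_of_norm_deriv_le_segment_01'
    (fun t _ => (hasDerivAt_softmax_add_smul v u a t).hasDerivWithinAt)
    (fun t _ => hderiv_le t)
  simpa [u] using hsegment

lemma lipschitzWith_softmax (a : Fin K) : LipschitzWith 2 (fun v : Fin K → ℝ => softmax v a) :=
  LipschitzWith.of_dist_le_mul fun v w => by
    simpa [Real.dist_eq, dist_eq_norm] using abs_softmax_sub_le w v a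

lemma sq_softmax_sub_le (v w : EuclideanSpace ℝ (Fin K)) (a : Fin K) :
    (softmax v a - softmax w a) ^ 2 ≤ 4 * ‖v - w‖ ^ 2 := by
  have hlip : |softmax v a - softmax w a| ≤ 2 * ‖v - w‖ := by
    simpa [dist_eq_norm] using
      ((lipschitzWith_softmax a).comp (PiLp.lipschitzWith_ofLp 2 _)).dist_le_mul v w
  nlinarith [pow_le_pow_left₀ (abs_nonneg _) hlip 2, sq_abs (softmax v a - softmax w a)]

end

lemma sq_add_sub_le_three_mul (x y z : ℝ) : (x + y - z) ^ 2 ≤ 3 * (x ^ 2 + y ^ 2 + z ^ 2) := by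
  nlinarith [sq_nonneg (x - y), sq_nonneg (x + z), sq_nonneg (y + z)]

theorem stmt_15_general (K : ℕ) (a : Fin K)
    (v₁ v₂ : EuclideanSpace ℝ (Fin K)) (α₁ α₂ β₁ β₂ : ℝ)
    (hα₁ : α₁ ∈ Set.Icc (-1 : ℝ) 1) :
    (ellK K v₁ α₁ β₁ a - ellK K v₂ α₂ β₂ a) ^ 2 ≤
      12 * (K : ℝ) ^ 2 * ‖v₁ - v₂‖ ^ 2 + 3 * (K : ℝ) ^ 2 * (α₁ - α₂) ^ 2
        + 3 * (β₁ - β₂) ^ 2 := by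
  set s₁ := softmax v₁ a
  set s₂ := softmax v₂ a
  have hα₁_sq : α₁ ^ 2 ≤ 1 := (sq_le_one_iff_abs_le_one α₁).2 (abs_le.2 hα₁)
  have hs₂_sq : s₂ ^ 2 ≤ 1 := pow_le_one₀ (softmax_pos _ a).le (softmax_le_one _ a)
  have hsoftmax_term : (K * (s₁ - s₂) * α₁) ^ 2 ≤ 4 * K ^ 2 * ‖v₁ - v₂‖ ^ 2 :=
    calc (K * (s₁ - s₂) * α₁) ^ 2 = K ^ 2 * ((s₁ - s₂) ^ 2 * α₁ ^ 2) := by ring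
      _ ≤ K ^ 2 * (4 * ‖v₁ - v₂‖ ^ 2 * 1) := by
          gcongr K ^ 2 * ?_
          exact mul_le_mul (sq_softmax_sub_le v₁ v₂ a) hα₁_sq (sq_nonneg _) (by positivity)
      _ = 4 * K ^ 2 * ‖v₁ - v₂‖ ^ 2 := by ring
  have hα_term : (K * s₂ * (α₁ - α₂)) ^ 2 ≤ K ^ 2 * (α₁ - α₂) ^ 2 :=
    calc (K * s₂ * (α₁ - α₂)) ^ 2 = K ^ 2 * s₂ ^ 2 * (α₁ - α₂) ^ 2 := by ring
      _ ≤ K ^ 2 * 1 * (α₁ - α₂) ^ 2 := by gcongr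
      _ = K ^ 2 * (α₁ - α₂) ^ 2 := by ring
  calc (ellK K v₁ α₁ β₁ a - ellK K v₂ α₂ β₂ a) ^ 2
      = (K * (s₁ - s₂) * α₁ + K * s₂ * (α₁ - α₂) - (β₁ - β₂)) ^ 2 := by
        simp only [ellK]; ring
    _ ≤ 3 * ((K * (s₁ - s₂) * α₁) ^ 2 + (K * s₂ * (α₁ - α₂)) ^ 2 + (β₁ - β₂) ^ 2) :=
        sq_add_sub_le_three_mul _ _ _
    _ ≤ _ := by linarith

/-- For all `v₁, v₂ ∈ ℝ^K`, `α₁, α₂, β₁, β₂ ∈ [−1,1]` and `a ∈ [K]`: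
`(ℓ(v₁,α₁,β₁,a) − ℓ(v₂,α₂,β₂,a))² ≤ 12K²‖v₁−v₂‖² + 3K²(α₁−α₂)² + 3(β₁−β₂)²`. -/
theorem stmt_15 (K : ℕ) (hK : 1 ≤ K) (a : Fin K)
    (v₁ v₂ : EuclideanSpace ℝ (Fin K)) (α₁ α₂ β₁ β₂ : ℝ)
    (hα₁ : α₁ ∈ Set.Icc (-1 : ℝ) 1) (hα₂ : α₂ ∈ Set.Icc (-1 : ℝ) 1)
    (hβ₁ : β₁ ∈ Set.Icc (-1 : ℝ) 1) (hβ₂ : β₂ ∈ Set.Icc (-1 : ℝ) 1) :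
    (ellK K v₁ α₁ β₁ a - ellK K v₂ α₂ β₂ a) ^ 2 ≤
      12 * (K : ℝ) ^ 2 * ‖v₁ - v₂‖ ^ 2 + 3 * (K : ℝ) ^ 2 * (α₁ - α₂) ^ 2
        + 3 * (β₁ - β₂) ^ 2 :=
  stmt_15_general K a v₁ v₂ α₁ α₂ β₁ β₂ hα₁
end
end
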